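/- arXiv:2504.09272 — 5 statements merged into one kernel-verified Lean document; each statement's English description precedes it below -/
import Mathlib

section
/- A vector y ∈ ℝ^n solves the variational inequality VI(u) if and only if there exists q ∈ ℝ^{m×d} such that Ay + 𝕂*q = u, ⟨q_j, (𝕂y)_j⟩ = |(𝕂y)_j| for all j = 1,…,m, and |q_j| ≤ 1 for all j = 1,…,m. -/
/-!
With `w = u - A y`, VI(u) says that `w` is a subgradient at `y` of the seminorm
`z ↦ ∑ j, ‖(K z) j‖`, i.e. `⟪w, ·⟫` is dominated by it and attains it at `y`.
By Hahn–Banach and Riesz, a dominated `⟪w, ·⟫` equals `⟪q, K ·⟫` for some `q` with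
`⟪q, B⟫ ≤ ∑ j, ‖B j‖` for all `B`, and testing `B` supported on row `j` gives `‖q j‖ ≤ 1`.
Conversely `‖q j‖ ≤ 1` gives the domination row by row, and equality of the sums at `K y`
forces equality in every row.
-/

open scoped RealInnerProductSpace BigOperators Classical Topology

noncomputable section

abbrev Euc (n : ℕ) := EuclideanSpace ℝ (Fin n)
abbrev Rows (m d : ℕ) := PiLp 2 (fun _ : Fin m => EuclideanSpace ℝ (Fin d))

variable {n m d : ℕ}

/-- `y` solves the variational inequality VI(u). -/
def IsVISol (A : Euc n →ₗ[ℝ] Euc n) (K : Euc n →ₗ[ℝ] Rows m d) (u y : Euc n) : Prop :=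
  ∀ v : Euc n, ⟪A y, v - y⟫ + ∑ j, (‖K v j‖ - ‖K y j‖) ≥ ⟪u, v - y⟫

/-- `q` is a slack variable for the pair `(u, y)`: primal-dual system. -/
def IsSlack (A : Euc n →ₗ[ℝ] Euc n) (K : Euc n →ₗ[ℝ] Rows m d) (u y : Euc n)
    (q : Rows m d) : Prop :=
  A y + (LinearMap.adjoint K) q = u ∧ (∀ j, ⟪q j, K y j⟫ = ‖K y j‖) ∧ ∀ j, ‖q j‖ ≤ 1

/-- The complementarity relations alone. -/
def ComplRel (K : Euc n →ₗ[ℝ] Rows m d) (y : Euc n) (q : Rows m d) : Prop :=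
  (∀ j, ⟪q j, K y j⟫ = ‖K y j‖) ∧ ∀ j, ‖q j‖ ≤ 1

/-- The cone `𝒦(y)` defined via a slack variable `q`. -/
def KconeQ (K : Euc n →ₗ[ℝ] Rows m d) (y : Euc n) (q : Rows m d) : Set (Euc n) :=
  {v | (∀ j, ‖q j‖ < 1 → K v j = 0) ∧
       ∀ j, ‖q j‖ = 1 → K y j = 0 → ⟪q j, K v j⟫ = ‖K v j‖}

/-- `∑_{j∈ℐ(y)} ⟨(𝕂y)_j/|(𝕂y)_j|, (𝕂v)_j⟩ + ∑_{j∈𝒜(y)} |(𝕂v)_j|`. -/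
def dirRHS (K : Euc n →ₗ[ℝ] Rows m d) (y v : Euc n) : ℝ :=
  ∑ j, if K y j ≠ 0 then ⟪(‖K y j‖)⁻¹ • K y j, K v j⟫ else ‖K v j‖

/-- The cone `𝒦(y)` in its slack-variable-free form. -/
def Kcone (A : Euc n →ₗ[ℝ] Euc n) (K : Euc n →ₗ[ℝ] Rows m d) (u y : Euc n) : Set (Euc n) :=
  {v | ⟪u - A y, v⟫ ≥ dirRHS K y v}

/-- Second order term `∑_{j∈ℐ(y)} ⟨(𝕂η)_j/|(𝕂y)_j| − ⟨(𝕂y)_j,(𝕂η)_j⟩(𝕂y)_j/|(𝕂y)_j|³, (𝕂w)_j⟩`. -/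
def secondForm (K : Euc n →ₗ[ℝ] Rows m d) (y η w : Euc n) : ℝ :=
  ∑ j, if K y j ≠ 0 then
      ⟪(‖K y j‖)⁻¹ • K η j - ((⟪K y j, K η j⟫) / ‖K y j‖ ^ 3) • K y j, K w j⟫
    else 0

/-- The quadratic functional `f_y` whose minimizer over `𝒦(y)` is the directional derivative. -/
def fy (A : Euc n →ₗ[ℝ] Euc n) (K : Euc n →ₗ[ℝ] Rows m d) (y h η : Euc n) : ℝ :=
  (1 / 2) * ⟪η, A η⟫ - ⟪h, η⟫ +
    (1 / 2) * ∑ j, if K y j ≠ 0 then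
        ‖K η j‖ ^ 2 / ‖K y j‖ - (⟪K y j, K η j⟫) ^ 2 / ‖K y j‖ ^ 3
      else 0

/-- `η` solves the VI of the first kind characterizing the directional derivative. -/
def VI1Sol (A : Euc n →ₗ[ℝ] Euc n) (K : Euc n →ₗ[ℝ] Rows m d) (u y h η : Euc n) : Prop :=
  η ∈ Kcone A K u y ∧ ∀ v ∈ Kcone A K u y,
    ⟪A η, v - η⟫ + secondForm K y η (v - η) ≥ ⟪h, v - η⟫

/-- Bouligand subdifferential of a map `S` at `u`. -/
def BSubdiff (S : Euc n → Euc n) (u : Euc n) : Set (Euc n →L[ℝ] Euc n) :=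
  {G | ∃ (uk : ℕ → Euc n) (Gk : ℕ → (Euc n →L[ℝ] Euc n)),
    (∀ k, HasFDerivAt S (Gk k) (uk k)) ∧
    Filter.Tendsto uk Filter.atTop (nhds u) ∧
    Filter.Tendsto Gk Filter.atTop (nhds G)}

/-- Biactive set associated with `y` and a slack variable `q`. -/
def Biactive (K : Euc n →ₗ[ℝ] Rows m d) (y : Euc n) (q : Rows m d) : Set (Fin m) :=
  {j | K y j = 0 ∧ ‖q j‖ = 1}

/-- The subspace `V` associated with a splitting `ℬ₀ ∪ ℬ₁` of the biactive set. -/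
def Vsub (K : Euc n →ₗ[ℝ] Rows m d) (q : Rows m d) (B0 B1 : Set (Fin m)) : Set (Euc n) :=
  {v | (∀ j, ‖q j‖ < 1 → K v j = 0) ∧ (∀ j ∈ B0, K v j = 0) ∧
       ∀ j ∈ B1, ∃ c : ℝ, K v j = c • q j}

section

variable {F : Type*} [NormedAddCommGroup F] [InnerProductSpace ℝ F]

theorem real_inner_le_norm_of_norm_le_one {a : F} (ha : ‖a‖ ≤ 1) (b : F) : ⟪a, b⟫ ≤ ‖b‖ :=
  (real_inner_le_norm a b).trans (mul_le_of_le_one_left (norm_nonneg b) ha)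

theorem forall_inner_sub_le_sub_iff_of_subadditive {φ : F → ℝ} (hφ0 : φ 0 = 0)
    (hφ_add : ∀ x y, φ (x + y) ≤ φ x + φ y) (w y : F) :
    (∀ v, ⟪w, v - y⟫ ≤ φ v - φ y) ↔ (∀ z, ⟪w, z⟫ ≤ φ z) ∧ ⟪w, y⟫ = φ y := by
  constructor
  · intro h
    have hle : ∀ z, ⟪w, z⟫ ≤ φ z := fun z => by
      have := h (y + z)
      rw [add_sub_cancel_left] at this
      linarith [hφ_add y z]
    have := h 0
    rw [zero_sub, inner_neg_right, hφ0] at this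
    exact ⟨hle, le_antisymm (hle y) (by linarith)⟩
  · rintro ⟨hle, heq⟩ v
    rw [inner_sub_right, heq]
    linarith [hle v]

end

namespace PiLp

variable {ι : Type*} [Fintype ι] {E : ι → Type*} [∀ i, NormedAddCommGroup (E i)]

theorem sum_norm_add_le (B C : PiLp 2 E) : ∑ i, ‖(B + C) i‖ ≤ ∑ i, ‖B i‖ + ∑ i, ‖C i‖ := by
  rw [← Finset.sum_add_distrib]
  exact Finset.sum_le_sum fun i _ => norm_add_le (B i) (C i)

theorem sum_norm_smul {𝕜 : Type*} [NormedField 𝕜] [∀ i, NormedSpace 𝕜 (E i)] (c : 𝕜)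
    (B : PiLp 2 E) : ∑ i, ‖(c • B) i‖ = ‖c‖ * ∑ i, ‖B i‖ := by
  simp only [PiLp.smul_apply, norm_smul, Finset.mul_sum]

variable [∀ i, InnerProductSpace ℝ (E i)] {q : PiLp 2 E}

theorem inner_le_sum_norm (hq : ∀ i, ‖q i‖ ≤ 1) (B : PiLp 2 E) : ⟪q, B⟫ ≤ ∑ i, ‖B i‖ := by
  rw [PiLp.inner_apply]
  exact Finset.sum_le_sum fun i _ => real_inner_le_norm_of_norm_le_one (hq i) (B i)

theorem inner_eq_sum_norm_iff (hq : ∀ i, ‖q i‖ ≤ 1) (B : PiLp 2 E) :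
    ⟪q, B⟫ = ∑ i, ‖B i‖ ↔ ∀ i, ⟪q i, B i⟫ = ‖B i‖ := by
  rw [PiLp.inner_apply, Finset.sum_eq_sum_iff_of_le
    fun i _ => real_inner_le_norm_of_norm_le_one (hq i) (B i)]
  simp only [Finset.mem_univ, true_implies]

theorem norm_apply_le_one_of_inner_le_sum_norm (hq : ∀ B : PiLp 2 E, ⟪q, B⟫ ≤ ∑ i, ‖B i‖)
    (i : ι) : ‖q i‖ ≤ 1 := by
  have h := hq (WithLp.toLp 2 (Pi.single i (q i)))
  have hsum : ∑ j, ‖(WithLp.toLp 2 (Pi.single i (q i)) : PiLp 2 E) j‖ = ‖q i‖ := by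
    rw [Finset.sum_eq_single i (fun j _ hj => by simp [Pi.single_eq_of_ne hj]) (by simp)]
    simp
  rw [PiLp.inner_apply, Finset.sum_eq_single i (fun j _ hj => by simp [Pi.single_eq_of_ne hj])
    (by simp), hsum] at h
  simp only [Pi.single_eq_same, real_inner_self_eq_norm_sq] at h
  nlinarith [norm_nonneg (q i)]

end PiLp

theorem LinearMap.exists_adjoint_eq_of_inner_le_comp {E F : Type*} [NormedAddCommGroup E]
    [InnerProductSpace ℝ E] [FiniteDimensional ℝ E] [NormedAddCommGroup F]
    [InnerProductSpace ℝ F] [FiniteDimensional ℝ F] (K : E →ₗ[ℝ] F) (p : F → ℝ)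
    (hp_smul : ∀ c : ℝ, 0 < c → ∀ x, p (c • x) = c * p x) (hp_add : ∀ x y, p (x + y) ≤ p x + p y)
    {w : E} (hw : ∀ z, ⟪w, z⟫ ≤ p (K z)) :
    ∃ q : F, LinearMap.adjoint K q = w ∧ ∀ B, ⟪q, B⟫ ≤ p B := by
  have hp0 : p 0 = 0 := by
    have h := hp_smul 2 two_pos 0
    rw [smul_zero] at h
    linarith
  -- `⟪w, ±z⟫ ≤ p 0 = 0` on `ker K`, so `K z ↦ ⟪w, z⟫` is well defined on `range K`.
  have hker : LinearMap.ker K ≤ LinearMap.ker (innerₛₗ ℝ w) := by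
    intro z hz
    have h1 := hw z
    have h2 := hw (-z)
    rw [LinearMap.mem_ker] at hz ⊢
    rw [hz, hp0] at h1
    rw [map_neg, hz, neg_zero, hp0, inner_neg_right] at h2
    simp only [innerₛₗ_apply_apply]
    linarith
  let ℓ : LinearMap.range K →ₗ[ℝ] ℝ :=
    (LinearMap.ker K).liftQ (innerₛₗ ℝ w) hker ∘ₗ K.quotKerEquivRange.symm.toLinearMap
  have hℓ : ∀ z (h : K z ∈ LinearMap.range K), ℓ ⟨K z, h⟩ = ⟪w, z⟫ := by
    intro z h
    simp [ℓ, LinearMap.quotKerEquivRange_symm_apply_image]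
  obtain ⟨g, hg_ext, hg_le⟩ := exists_extension_of_le_sublinear ⟨LinearMap.range K, ℓ⟩ p
    hp_smul hp_add (by rintro ⟨_, z, rfl⟩; exact (hℓ z _).trans_le (hw z))
  refine ⟨(InnerProductSpace.toDual ℝ F).symm (LinearMap.toContinuousLinearMap g), ?_, ?_⟩
  · refine ext_inner_right ℝ fun z => ?_
    rw [LinearMap.adjoint_inner_left, InnerProductSpace.toDual_symm_apply]
    exact (hg_ext ⟨K z, z, rfl⟩).trans (hℓ z _)
  · intro B
    rw [InnerProductSpace.toDual_symm_apply]
    exact hg_le B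

theorem stmt2_general {n m d : ℕ} (A : Euc n →ₗ[ℝ] Euc n)
    (K : Euc n →ₗ[ℝ] Rows m d) (u y : Euc n) :
    IsVISol A K u y ↔
      ∃ q : Rows m d, A y + (LinearMap.adjoint K) q = u ∧
        (∀ j, ⟪q j, K y j⟫ = ‖K y j‖) ∧ ∀ j, ‖q j‖ ≤ 1 := by
  set p : Rows m d → ℝ := fun B => ∑ j, ‖B j‖ with hp
  have hVI : IsVISol A K u y ↔ ∀ v, ⟪u - A y, v - y⟫ ≤ p (K v) - p (K y) := by
    simp only [IsVISol, hp, inner_sub_left, ← Finset.sum_sub_distrib]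
    exact forall_congr' fun v => by constructor <;> intro h <;> linarith
  refine hVI.trans <| (forall_inner_sub_le_sub_iff_of_subadditive (φ := p ∘ K) (by simp [hp])
    (fun x z => by simpa only [Function.comp_apply, map_add] using PiLp.sum_norm_add_le _ _)
    (u - A y) y).trans ?_
  constructor
  · rintro ⟨hle, heq⟩
    obtain ⟨q, hq, hq_le⟩ := K.exists_adjoint_eq_of_inner_le_comp p
      (fun c hc B => (PiLp.sum_norm_smul c B).trans (by rw [Real.norm_of_nonneg hc.le]))
      PiLp.sum_norm_add_le hle
    have hq1 := PiLp.norm_apply_le_one_of_inner_le_sum_norm hq_le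
    refine ⟨q, by rw [hq, add_sub_cancel], (PiLp.inner_eq_sum_norm_iff hq1 (K y)).1 ?_, hq1⟩
    rw [← LinearMap.adjoint_inner_left, hq, heq]
    rfl
  · rintro ⟨q, hq, hcompl, hq1⟩
    have hw : LinearMap.adjoint K q = u - A y := by rw [← hq, add_sub_cancel_left]
    simp only [← hw, LinearMap.adjoint_inner_left]
    exact ⟨fun z => PiLp.inner_le_sum_norm hq1 (K z), (PiLp.inner_eq_sum_norm_iff hq1 _).2 hcompl⟩

/-- primal-dual characterization of solutions of VI(u). -/
theorem stmt2 {n m d : ℕ} (A : Euc n →ₗ[ℝ] Euc n)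
    (hAsymm : ∀ x z : Euc n, ⟪A x, z⟫ = ⟪x, A z⟫)
    (hApos : ∀ x : Euc n, x ≠ 0 → 0 < ⟪x, A x⟫)
    (K : Euc n →ₗ[ℝ] Rows m d) (hK : Function.Injective K) (u y : Euc n) :
    IsVISol A K u y ↔
      ∃ q : Rows m d, A y + (LinearMap.adjoint K) q = u ∧
        (∀ j, ⟪q j, K y j⟫ = ‖K y j‖) ∧ ∀ j, ‖q j‖ ≤ 1 :=
  stmt2_general A K u y
end
end

section
/- Suppose y ∈ ℝ^n and q ∈ ℝ^{m×d} satisfy ⟨q_j, (𝕂y)_j⟩ = |(𝕂y)_j| and |q_j| ≤ 1 for all j = 1,…,m. Then the set {v ∈ ℝ^n : (𝕂v)_j = 0 whenever |q_j| < 1, and ⟨q_j, (𝕂v)_j⟩ = |(𝕂v)_j| whenever |q_j| = 1 and (𝕂y)_j = 0} coincides with the set {v ∈ ℝ^n : ⟨𝕂*q, v⟩ ≥ ∑_{j∈ℐ(y)} ⟨(𝕂y)_j/|(𝕂y)_j|, (𝕂v)_j⟩ + ∑_{j∈𝒜(y)} |(𝕂v)_j|}. -/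
open scoped RealInnerProductSpace BigOperators Classical Topology

noncomputable section

variable {n m d : ℕ}

/-!
The complementarity relations say that each row `q j` is a subgradient of the norm at
`(K y) j`. A subgradient is dominated by the directional derivative of the norm, so
`⟪q j, (K v) j⟫ ≤ ‖·‖'((K y) j; (K v) j)` row by row; summing, `⟪K* q, v⟫ ≤ dirRHS K y v`
always holds. The reverse inequality therefore forces equality in every row, and for a
subgradient `a` at `x` the equality `⟪a, w⟫ = ‖·‖'(x; w)` is exactly the condition defining
`KconeQ`: `w = 0` if `‖a‖ < 1`, and `⟪a, w⟫ = ‖w‖` if `‖a‖ = 1` and `x = 0`.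
-/

section NormDirDeriv

variable {E : Type*} [NormedAddCommGroup E] [InnerProductSpace ℝ E]

def normDirDeriv (x w : E) : ℝ :=
  if x ≠ 0 then ⟪(‖x‖)⁻¹ • x, w⟫ else ‖w‖

/-- A subgradient of the norm at a nonzero point is its normalization. -/
lemma eq_inv_norm_smul_of_inner_eq_norm {a x : E} (hax : ⟪a, x⟫ = ‖x‖) (ha : ‖a‖ ≤ 1)
    (hx : x ≠ 0) : a = (‖x‖)⁻¹ • x := by
  have hx₀ : 0 < ‖x‖ := norm_pos_iff.mpr hx
  have ha₁ : ‖a‖ = 1 := by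
    refine le_antisymm ha (le_of_mul_le_mul_right ?_ hx₀)
    simpa [hax] using real_inner_le_norm a x
  have hcol : ‖x‖ • a = ‖a‖ • x := inner_eq_norm_mul_iff_real.mp (by rw [hax, ha₁, one_mul])
  rwa [ha₁, one_smul, ← eq_inv_smul_iff₀ hx₀.ne'] at hcol

lemma norm_eq_one_of_inner_eq_norm {a x : E} (hax : ⟪a, x⟫ = ‖x‖) (ha : ‖a‖ ≤ 1)
    (hx : x ≠ 0) : ‖a‖ = 1 := by
  rw [eq_inv_norm_smul_of_inner_eq_norm hax ha hx, norm_smul, norm_inv, norm_norm,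
    inv_mul_cancel₀ (norm_ne_zero_iff.mpr hx)]

lemma inner_le_normDirDeriv {a x : E} (hax : ⟪a, x⟫ = ‖x‖) (ha : ‖a‖ ≤ 1) (w : E) :
    ⟪a, w⟫ ≤ normDirDeriv x w := by
  by_cases hx : x = 0
  · simp only [normDirDeriv, hx, ne_eq, not_true_eq_false, if_false]
    calc ⟪a, w⟫ ≤ ‖a‖ * ‖w‖ := real_inner_le_norm a w
      _ ≤ ‖w‖ := mul_le_of_le_one_left (norm_nonneg w) ha
  · simp only [normDirDeriv, ne_eq, hx, not_false_eq_true, if_true,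
      ← eq_inv_norm_smul_of_inner_eq_norm hax ha hx, le_refl]

lemma inner_eq_normDirDeriv_iff {a x : E} (hax : ⟪a, x⟫ = ‖x‖) (ha : ‖a‖ ≤ 1) (w : E) :
    ⟪a, w⟫ = normDirDeriv x w ↔ (‖a‖ < 1 → w = 0) ∧ (‖a‖ = 1 → x = 0 → ⟪a, w⟫ = ‖w‖) := by
  by_cases hx : x = 0
  · simp only [normDirDeriv, hx, ne_eq, not_true_eq_false, if_false, forall_const]
    rcases ha.lt_or_eq with ha₁ | ha₁
    · simp only [ha₁, ha₁.ne, false_imp_iff, and_true, forall_const]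
      constructor
      · intro hw
        by_contra hw₀
        have := real_inner_le_norm a w
        have : ‖a‖ * ‖w‖ < ‖w‖ := mul_lt_of_lt_one_left (norm_pos_iff.mpr hw₀) ha₁
        linarith
      · rintro rfl
        simp
    · simp [ha₁]
  · simp only [normDirDeriv, ne_eq, hx, not_false_eq_true, if_true,
      ← eq_inv_norm_smul_of_inner_eq_norm hax ha hx, norm_eq_one_of_inner_eq_norm hax ha hx,
      lt_irrefl, false_imp_iff, imp_self, and_self]

end NormDirDeriv

lemma dirRHS_eq_sum_normDirDeriv {n m d : ℕ} (K : Euc n →ₗ[ℝ] Rows m d) (y v : Euc n) :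
    dirRHS K y v = ∑ j, normDirDeriv (K y j) (K v j) := by
  simp only [dirRHS, normDirDeriv]

theorem stmt5_general {n m d : ℕ} (K : Euc n →ₗ[ℝ] Rows m d)
    (y : Euc n) (q : Rows m d) (hq : ComplRel K y q) :
    KconeQ K y q = {v : Euc n | ⟪(LinearMap.adjoint K) q, v⟫ ≥ dirRHS K y v} := by
  obtain ⟨hqy, hq₁⟩ := hq
  ext v
  have hadj : ⟪(LinearMap.adjoint K) q, v⟫ = ∑ j, ⟪q j, K v j⟫ := by
    rw [LinearMap.adjoint_inner_left, PiLp.inner_apply]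
  have hle : ∀ j ∈ Finset.univ, ⟪q j, K v j⟫ ≤ normDirDeriv (K y j) (K v j) :=
    fun j _ => inner_le_normDirDeriv (hqy j) (hq₁ j) (K v j)
  have hsum : ∑ j, ⟪q j, K v j⟫ ≤ dirRHS K y v :=
    dirRHS_eq_sum_normDirDeriv K y v ▸ Finset.sum_le_sum hle
  calc v ∈ KconeQ K y q ↔ ∀ j, ⟪q j, K v j⟫ = normDirDeriv (K y j) (K v j) := by
        simp only [KconeQ, Set.mem_ofPred_eq, inner_eq_normDirDeriv_iff (hqy _) (hq₁ _),
          forall_and]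
    _ ↔ ∑ j, ⟪q j, K v j⟫ = dirRHS K y v := by
        simp only [dirRHS_eq_sum_normDirDeriv, Finset.sum_eq_sum_iff_of_le hle,
          Finset.mem_univ, forall_const]
    _ ↔ ⟪(LinearMap.adjoint K) q, v⟫ ≥ dirRHS K y v := by
        rw [hadj, ge_iff_le, hsum.ge_iff_eq]

/-- equivalent description of the cone `𝒦(y)` under the complementarity relations. -/
theorem stmt5 {n m d : ℕ} (K : Euc n →ₗ[ℝ] Rows m d) (hK : Function.Injective K)
    (y : Euc n) (q : Rows m d) (hq : ComplRel K y q) :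
    KconeQ K y q = {v : Euc n | ⟪(LinearMap.adjoint K) q, v⟫ ≥ dirRHS K y v} :=
  stmt5_general K y q hq
end
end

section
/- Let y ∈ ℝ^n and let q¹, q² ∈ ℝ^{m×d} be two slack variables for the same pair (u, y), i.e. Ay + 𝕂*qⁱ = u, ⟨qⁱ_j, (𝕂y)_j⟩ = |(𝕂y)_j| and |qⁱ_j| ≤ 1 for all j and i = 1, 2. Then the two cones 𝒦ᵢ := {v ∈ ℝ^n : (𝕂v)_j = 0 whenever |qⁱ_j| < 1, and ⟨qⁱ_j, (𝕂v)_j⟩ = |(𝕂v)_j| whenever |qⁱ_j| = 1 and (𝕂y)_j = 0}, i = 1, 2, coincide. -/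
open scoped RealInnerProductSpace BigOperators Classical Topology

noncomputable section

variable {n m d : ℕ}

/-!
On an inactive row (`(𝕂y)_j ≠ 0`) the complementarity relations force `qⁱ_j = (𝕂y)_j / |(𝕂y)_j|`,
so `q¹` and `q²` can differ only on active rows. Membership of `v` in `𝒦ᵢ` amounts to
`⟨qⁱ_j, (𝕂v)_j⟩ = |(𝕂v)_j|` on every active row. For `v ∈ 𝒦₁` this gives
`⟨q²_j, (𝕂v)_j⟩ ≤ ⟨q¹_j, (𝕂v)_j⟩` row by row, and both sides sum to `⟨𝕂*qⁱ, v⟩ = ⟨u - Ay, v⟩`,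
so every row inequality is an equality and `v ∈ 𝒦₂`.
-/

section UnitBall

variable {E : Type*} [NormedAddCommGroup E] [InnerProductSpace ℝ E] {p x : E}

lemma real_inner_le_norm_of_norm_le_one_s6 (hp : ‖p‖ ≤ 1) : ⟪p, x⟫ ≤ ‖x‖ :=
  (real_inner_le_norm p x).trans (mul_le_of_le_one_left (norm_nonneg x) hp)

lemma norm_eq_one_of_inner_eq_norm_s6 (hp : ‖p‖ ≤ 1) (hpx : ⟪p, x⟫ = ‖x‖) (hx : x ≠ 0) :
    ‖p‖ = 1 := by
  have hxpos : 0 < ‖x‖ := norm_pos_iff.mpr hx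
  have : ‖x‖ ≤ ‖p‖ * ‖x‖ := hpx ▸ real_inner_le_norm p x
  exact le_antisymm hp (le_of_mul_le_mul_right (by simpa using this) hxpos)

lemma eq_inv_norm_smul_of_inner_eq_norm_s6 (hp : ‖p‖ ≤ 1) (hpx : ⟪p, x⟫ = ‖x‖) (hx : x ≠ 0) :
    p = ‖x‖⁻¹ • x := by
  have hp1 := norm_eq_one_of_inner_eq_norm_s6 hp hpx hx
  have hcs : ⟪p, x⟫ = ‖p‖ * ‖x‖ := by rw [hpx, hp1, one_mul]
  have hxp : ‖x‖ • p = x := by simpa [hp1] using inner_eq_norm_mul_iff_real.mp hcs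
  rw [eq_inv_smul_iff₀ (norm_ne_zero_iff.mpr hx), hxp]

lemma eq_zero_of_inner_eq_norm_of_norm_lt_one (hp : ‖p‖ < 1) (hpx : ⟪p, x⟫ = ‖x‖) : x = 0 := by
  by_contra hx
  exact hp.ne (norm_eq_one_of_inner_eq_norm_s6 hp.le hpx hx)

end UnitBall

section Cone

variable {K : Euc n →ₗ[ℝ] Rows m d} {y v : Euc n} {q q₁ q₂ : Rows m d}

lemma IsSlack.complRel {A : Euc n →ₗ[ℝ] Euc n} {u : Euc n} (hq : IsSlack A K u y q) :
    ComplRel K y q :=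
  hq.2

lemma IsSlack.adjoint_eq {A : Euc n →ₗ[ℝ] Euc n} {u : Euc n} (hq₁ : IsSlack A K u y q₁)
    (hq₂ : IsSlack A K u y q₂) : LinearMap.adjoint K q₁ = LinearMap.adjoint K q₂ :=
  add_left_cancel (hq₁.1.trans hq₂.1.symm)

lemma ComplRel.row_eq (hq : ComplRel K y q) {j : Fin m} (hj : K y j ≠ 0) :
    q j = ‖K y j‖⁻¹ • K y j :=
  eq_inv_norm_smul_of_inner_eq_norm_s6 (hq.2 j) (hq.1 j) hj

lemma ComplRel.mem_KconeQ_iff (hq : ComplRel K y q) :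
    v ∈ KconeQ K y q ↔ ∀ j, K y j = 0 → ⟪q j, K v j⟫ = ‖K v j‖ := by
  constructor
  · rintro ⟨hinact, hbiact⟩ j hj
    rcases (hq.2 j).lt_or_eq with hlt | heq
    · simp [hinact j hlt]
    · exact hbiact j heq hj
  · intro hact
    refine ⟨fun j hlt => ?_, fun j _ hj => hact j hj⟩
    have hj : K y j = 0 := by
      by_contra hj
      exact hlt.ne (norm_eq_one_of_inner_eq_norm_s6 (hq.2 j) (hq.1 j) hj)
    exact eq_zero_of_inner_eq_norm_of_norm_lt_one hlt (hact j hj)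

lemma sum_inner_rows_eq_inner_adjoint (K : Euc n →ₗ[ℝ] Rows m d) (q : Rows m d) (v : Euc n) :
    ∑ j, ⟪q j, K v j⟫ = ⟪LinearMap.adjoint K q, v⟫ := by
  rw [LinearMap.adjoint_inner_left, PiLp.inner_apply]

lemma KconeQ_subset_of_adjoint_eq (hq₁ : ComplRel K y q₁) (hq₂ : ComplRel K y q₂)
    (hadj : LinearMap.adjoint K q₁ = LinearMap.adjoint K q₂) :
    KconeQ K y q₁ ⊆ KconeQ K y q₂ := by
  intro v hv
  have hact₁ := hq₁.mem_KconeQ_iff.mp hv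
  have hrow_le : ∀ j ∈ Finset.univ, ⟪q₂ j, K v j⟫ ≤ ⟪q₁ j, K v j⟫ := by
    intro j _
    by_cases hj : K y j = 0
    · exact hact₁ j hj ▸ real_inner_le_norm_of_norm_le_one_s6 (hq₂.2 j)
    · rw [hq₁.row_eq hj, hq₂.row_eq hj]
  have hsum : ∑ j, ⟪q₂ j, K v j⟫ = ∑ j, ⟪q₁ j, K v j⟫ := by
    rw [sum_inner_rows_eq_inner_adjoint, sum_inner_rows_eq_inner_adjoint, hadj]
  have hrow_eq := (Finset.sum_eq_sum_iff_of_le hrow_le).mp hsum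
  exact hq₂.mem_KconeQ_iff.mpr fun j hj => (hrow_eq j (Finset.mem_univ j)).trans (hact₁ j hj)

end Cone

theorem stmt6_general {n m d : ℕ} (A : Euc n →ₗ[ℝ] Euc n)
    (K : Euc n →ₗ[ℝ] Rows m d) (u y : Euc n)
    (q₁ q₂ : Rows m d) (hq₁ : IsSlack A K u y q₁) (hq₂ : IsSlack A K u y q₂) :
    KconeQ K y q₁ = KconeQ K y q₂ :=
  (KconeQ_subset_of_adjoint_eq hq₁.complRel hq₂.complRel (hq₁.adjoint_eq hq₂)).antisymm
    (KconeQ_subset_of_adjoint_eq hq₂.complRel hq₁.complRel (hq₂.adjoint_eq hq₁))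

/-- the cone `𝒦(y)` does not depend on the choice of slack variable. -/
theorem stmt6 {n m d : ℕ} (A : Euc n →ₗ[ℝ] Euc n)
    (hAsymm : ∀ x z : Euc n, ⟪A x, z⟫ = ⟪x, A z⟫)
    (hApos : ∀ x : Euc n, x ≠ 0 → 0 < ⟪x, A x⟫)
    (K : Euc n →ₗ[ℝ] Rows m d) (hK : Function.Injective K) (u y : Euc n)
    (q₁ q₂ : Rows m d) (hq₁ : IsSlack A K u y q₁) (hq₂ : IsSlack A K u y q₂) :
    KconeQ K y q₁ = KconeQ K y q₂ :=
  stmt6_general A K u y q₁ q₂ hq₁ hq₂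
end
end

section
/- Let (y, q) satisfy ⟨q_j, (𝕂y)_j⟩ = |(𝕂y)_j| and |q_j| ≤ 1 for all j, and let (y′, q′) satisfy the same relations, with ℐ(y) ⊆ ℐ(y′) and q′_j = (𝕂y′)_j/|(𝕂y′)_j| for all j ∈ ℐ(y′). Then for every v in the cone 𝒦(y) := {v ∈ ℝ^n : ⟨𝕂*q, v⟩ ≥ ∑_{j∈ℐ(y)} ⟨(𝕂y)_j/|(𝕂y)_j|, (𝕂v)_j⟩ + ∑_{j∈𝒜(y)} |(𝕂v)_j|} one has ⟨𝕂*(q′ − q), v⟩ ≤ ∑_{j∈ℐ(y)} ⟨(𝕂y′)_j/|(𝕂y′)_j| − (𝕂y)_j/|(𝕂y)_j|, (𝕂v)_j⟩. -/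
/-
Pair `𝕂*q'` with `v` row by row. On `ℐ(y) ⊆ ℐ(y')` the row `q'_j` is the unit vector
`(𝕂y')_j/|(𝕂y')_j|`, which is the first sum of the right-hand side plus the `ℐ(y)`-part of the
cone bound; on `𝒜(y)` Cauchy–Schwarz and `|q'_j| ≤ 1` give `⟨q'_j, (𝕂v)_j⟩ ≤ |(𝕂v)_j|`, the
`𝒜(y)`-part of the cone bound. Hence `⟨𝕂*q', v⟩` is at most the right-hand side plus the cone
bound, and the cone bound is at most `⟨𝕂*q, v⟩` for `v ∈ 𝒦(y)`.
-/

open scoped RealInnerProductSpace BigOperators Classical Topology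

noncomputable section

variable {n m d : ℕ}

theorem inner_adjoint_left_piLp {ι E : Type*} [Fintype ι] {F : ι → Type*}
    [∀ i, NormedAddCommGroup (F i)] [∀ i, InnerProductSpace ℝ (F i)]
    [∀ i, FiniteDimensional ℝ (F i)] [NormedAddCommGroup E] [InnerProductSpace ℝ E]
    [FiniteDimensional ℝ E] (K : E →ₗ[ℝ] PiLp 2 F) (w : PiLp 2 F) (v : E) :
    ⟪LinearMap.adjoint K w, v⟫ = ∑ j, ⟪w j, K v j⟫ := by
  rw [LinearMap.adjoint_inner_left, PiLp.inner_apply]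

theorem real_inner_le_norm_of_norm_le_one_s8 {F : Type*} [NormedAddCommGroup F]
    [InnerProductSpace ℝ F] {a : F} (ha : ‖a‖ ≤ 1) (x : F) : ⟪a, x⟫ ≤ ‖x‖ :=
  (real_inner_le_norm a x).trans (mul_le_of_le_one_left (norm_nonneg x) ha)

theorem inner_adjoint_le_dirRHS_add (K : Euc n →ₗ[ℝ] Rows m d) (y y' v : Euc n)
    (q' : Rows m d) (hq' : ∀ j, ‖q' j‖ ≤ 1) (hI : ∀ j : Fin m, K y j ≠ 0 → K y' j ≠ 0)
    (hq'I : ∀ j : Fin m, K y' j ≠ 0 → q' j = (‖K y' j‖)⁻¹ • K y' j) :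
    ⟪LinearMap.adjoint K q', v⟫ ≤ dirRHS K y v +
      ∑ j, if K y j ≠ 0 then ⟪(‖K y' j‖)⁻¹ • K y' j - (‖K y j‖)⁻¹ • K y j, K v j⟫ else 0 := by
  rw [inner_adjoint_left_piLp, dirRHS, ← Finset.sum_add_distrib]
  refine Finset.sum_le_sum fun j _ => ?_
  by_cases h : K y j ≠ 0
  · simp only [if_pos h, hq'I j (hI j h), inner_sub_left, add_sub_cancel, le_refl]
  · simpa only [h, if_false, add_zero] using real_inner_le_norm_of_norm_le_one_s8 (hq' j) (K v j)

theorem stmt8_general {n m d : ℕ} (K : Euc n →ₗ[ℝ] Rows m d)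
    (y y' : Euc n) (q q' : Rows m d) (hq' : ComplRel K y' q')
    (hI : ∀ j : Fin m, K y j ≠ 0 → K y' j ≠ 0)
    (hq'I : ∀ j : Fin m, K y' j ≠ 0 → q' j = (‖K y' j‖)⁻¹ • K y' j) :
    ∀ v : Euc n, ⟪(LinearMap.adjoint K) q, v⟫ ≥ dirRHS K y v →
      ⟪(LinearMap.adjoint K) (q' - q), v⟫ ≤
        ∑ j, if K y j ≠ 0 then
            ⟪(‖K y' j‖)⁻¹ • K y' j - (‖K y j‖)⁻¹ • K y j, K v j⟫
          else 0 := by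
  intro v hv
  have hq'v := inner_adjoint_le_dirRHS_add K y y' v q' hq'.2 hI hq'I
  rw [map_sub, inner_sub_left]
  linarith

/-- the key sign condition for the difference of slack variables on `𝒦(y)`. -/
theorem stmt8 {n m d : ℕ} (K : Euc n →ₗ[ℝ] Rows m d) (hK : Function.Injective K)
    (y y' : Euc n) (q q' : Rows m d) (hq : ComplRel K y q) (hq' : ComplRel K y' q')
    (hI : ∀ j : Fin m, K y j ≠ 0 → K y' j ≠ 0)
    (hq'I : ∀ j : Fin m, K y' j ≠ 0 → q' j = (‖K y' j‖)⁻¹ • K y' j) :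
    ∀ v : Euc n, ⟪(LinearMap.adjoint K) q, v⟫ ≥ dirRHS K y v →
      ⟪(LinearMap.adjoint K) (q' - q), v⟫ ≤
        ∑ j, if K y j ≠ 0 then
            ⟪(‖K y' j‖)⁻¹ • K y' j - (‖K y j‖)⁻¹ • K y j, K v j⟫
          else 0 :=
  stmt8_general K y y' q q' hq' hI hq'I
end
end

section
/- Let u ∈ ℝ^n, let y be the unique solution of VI(u), and let h ∈ ℝ^n. Then the variational inequality of the first kind: find η ∈ 𝒦(y) with ⟨Aη, v−η⟩ + ∑_{j∈ℐ(y)} ⟨(𝕂η)_j/|(𝕂y)_j| − ⟨(𝕂y)_j, (𝕂η)_j⟩ (𝕂y)_j/|(𝕂y)_j|³, (𝕂v)_j − (𝕂η)_j⟩ ≥ ⟨h, v−η⟩ for all v ∈ 𝒦(y), has exactly one solution η, and η is the unique minimizer over 𝒦(y) of f_y(η) := (1/2)⟨η, Aη⟩ − ⟨h, η⟩ + (1/2)∑_{j∈ℐ(y)}( |(𝕂η)_j|²/|(𝕂y)_j| − ⟨(𝕂y)_j, (𝕂η)_j⟩²/|(𝕂y)_j|³ ). -/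
open scoped RealInnerProductSpace BigOperators Classical Topology

noncomputable section

variable {n m d : ℕ}

/-! The form `B(η, w) = ⟪Aη, w⟫ + secondForm K y η w` is symmetric and positive definite: `A` is,
and each summand `⟪p, p⟫/‖a‖ - ⟪a, p⟫²/‖a‖³` of the second form is nonnegative by Cauchy–Schwarz.
Since `f_y(η) = B(η, η)/2 - ⟪h, η⟫`, we have
`f_y(v) = f_y(η) + (B(η, v - η) - ⟪h, v - η⟫) + B(v - η, v - η)/2`,
so a solution of the VI is the strict minimizer of `f_y` on `𝒦(y)`. Conversely, `𝒦(y)` is closed,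
convex and contains `0`, so the coercive `f_y` attains its minimum there, and comparing with the
points `η + t(v - η)`, `t ↓ 0`, shows that the minimizer solves the VI. -/

open Filter

section VariationalInequality

variable {E : Type*} [AddCommGroup E] [Module ℝ E]

def IsVarIneqSol (B : E →ₗ[ℝ] E →ₗ[ℝ] ℝ) (ℓ : E →ₗ[ℝ] ℝ) (C : Set E) (x : E) : Prop :=
  x ∈ C ∧ ∀ v ∈ C, ℓ (v - x) ≤ B x (v - x)

def quadEnergy (B : E →ₗ[ℝ] E →ₗ[ℝ] ℝ) (ℓ : E →ₗ[ℝ] ℝ) (x : E) : ℝ :=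
  B x x / 2 - ℓ x

variable {B : E →ₗ[ℝ] E →ₗ[ℝ] ℝ} {ℓ : E →ₗ[ℝ] ℝ} {C : Set E} {x x' v : E}

lemma quadEnergy_add (hB : ∀ x w, B x w = B w x) (x w : E) :
    quadEnergy B ℓ (x + w) = quadEnergy B ℓ x + (B x w - ℓ w) + B w w / 2 := by
  simp only [quadEnergy, map_add, LinearMap.add_apply, hB w x]
  ring

lemma IsVarIneqSol.quadEnergy_lt (hB : ∀ x w, B x w = B w x) (hpos : ∀ x, x ≠ 0 → 0 < B x x)
    (hx : IsVarIneqSol B ℓ C x) (hv : v ∈ C) (hne : v ≠ x) :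
    quadEnergy B ℓ x < quadEnergy B ℓ v := by
  have hexp := quadEnergy_add (ℓ := ℓ) hB x (v - x)
  rw [add_sub_cancel] at hexp
  have := hx.2 v hv
  have := hpos (v - x) (sub_ne_zero.2 hne)
  linarith

lemma IsVarIneqSol.unique (hB : ∀ x w, B x w = B w x) (hpos : ∀ x, x ≠ 0 → 0 < B x x)
    (hx : IsVarIneqSol B ℓ C x) (hx' : IsVarIneqSol B ℓ C x') : x = x' := by
  by_contra hne
  have := hx.quadEnergy_lt hB hpos hx'.1 (Ne.symm hne)
  have := hx'.quadEnergy_lt hB hpos hx.1 hne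
  linarith

lemma nonneg_of_forall_mul_add_sq_mul_nonneg {a b : ℝ}
    (h : ∀ t ∈ Set.Ioc (0 : ℝ) 1, 0 ≤ t * a + t ^ 2 * b) : 0 ≤ a := by
  have hlim : Tendsto (fun t : ℝ => a + t * b) (𝓝[>] 0) (𝓝 a) := by
    have hcont : Continuous fun t : ℝ => a + t * b := by fun_prop
    simpa using (hcont.tendsto 0).mono_left nhdsWithin_le_nhds
  refine ge_of_tendsto hlim ?_
  filter_upwards [Ioc_mem_nhdsGT (zero_lt_one' ℝ)] with t ht
  have := h t ht
  nlinarith [ht.1]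

lemma IsMinOn.isVarIneqSol (hB : ∀ x w, B x w = B w x) (hC : Convex ℝ C) (hx : x ∈ C)
    (hmin : IsMinOn (quadEnergy B ℓ) C x) : IsVarIneqSol B ℓ C x := by
  refine ⟨hx, fun v hv => sub_nonneg.1 <| nonneg_of_forall_mul_add_sq_mul_nonneg
    (b := B (v - x) (v - x) / 2) fun t ht => ?_⟩
  have hmem := hC.add_smul_sub_mem hx hv (Set.Ioc_subset_Icc_self ht)
  have hle : quadEnergy B ℓ x ≤ quadEnergy B ℓ (x + t • (v - x)) := hmin hmem
  simp only [quadEnergy_add hB, map_smul, LinearMap.smul_apply, smul_eq_mul] at hle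
  linarith

end VariationalInequality

section FiniteDimensional

variable {E : Type*} [NormedAddCommGroup E] [NormedSpace ℝ E] [FiniteDimensional ℝ E]
  {B : E →ₗ[ℝ] E →ₗ[ℝ] ℝ} {ℓ : E →ₗ[ℝ] ℝ} {C : Set E}

lemma LinearMap.continuous_apply_self (B : E →ₗ[ℝ] E →ₗ[ℝ] ℝ) : Continuous fun x => B x x := by
  let B' : E →L[ℝ] E →L[ℝ] ℝ :=
    LinearMap.toContinuousLinearMap (LinearMap.toContinuousLinearMap.toLinearMap ∘ₗ B)
  exact B'.continuous₂.comp (continuous_id.prodMk continuous_id)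

lemma exists_pos_mul_sq_norm_le (hpos : ∀ x, x ≠ 0 → 0 < B x x) :
    ∃ α > 0, ∀ x, α * ‖x‖ ^ 2 ≤ B x x := by
  rcases subsingleton_or_nontrivial E with hE | hE
  · exact ⟨1, one_pos, fun x => by simp [Subsingleton.elim x 0]⟩
  obtain ⟨z, hz, hzmin⟩ := (isCompact_sphere (0 : E) 1).exists_isMinOn
    (NormedSpace.sphere_nonempty.2 zero_le_one) B.continuous_apply_self.continuousOn
  have hz0 : z ≠ 0 := ne_zero_of_mem_unit_sphere ⟨z, hz⟩
  refine ⟨B z z, hpos z hz0, fun x => ?_⟩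
  rcases eq_or_ne x 0 with rfl | hx
  · simp
  have hnx : ‖x‖ ≠ 0 := norm_ne_zero_iff.2 hx
  have hunit : ‖x‖⁻¹ • x ∈ Metric.sphere (0 : E) 1 := by
    simp [norm_smul, hnx]
  have hle : B z z ≤ ‖x‖⁻¹ * (‖x‖⁻¹ * B x x) := by
    simpa using hzmin hunit
  calc B z z * ‖x‖ ^ 2 ≤ ‖x‖⁻¹ * (‖x‖⁻¹ * B x x) * ‖x‖ ^ 2 := by gcongr
    _ = B x x := by field_simp

lemma tendsto_quadEnergy_cocompact (hpos : ∀ x, x ≠ 0 → 0 < B x x) :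
    Tendsto (quadEnergy B ℓ) (cocompact E) atTop := by
  obtain ⟨α, hα, hcoer⟩ := exists_pos_mul_sq_norm_le hpos
  set c := ‖LinearMap.toContinuousLinearMap ℓ‖
  have hbound : ∀ x, ‖x‖ * (α / 2 * ‖x‖ - c) ≤ quadEnergy B ℓ x := fun x => by
    have hℓ : ℓ x ≤ c * ‖x‖ :=
      (le_abs_self _).trans ((LinearMap.toContinuousLinearMap ℓ).le_opNorm x)
    have := hcoer x
    simp only [quadEnergy]
    nlinarith
  refine tendsto_atTop_mono hbound (Tendsto.atTop_mul_atTop₀ ?_ ?_)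
  · exact tendsto_norm_cocompact_atTop
  · exact tendsto_atTop_add_const_right _ _
      ((tendsto_const_mul_atTop_of_pos (by positivity)).2 tendsto_norm_cocompact_atTop)

lemma continuous_quadEnergy (B : E →ₗ[ℝ] E →ₗ[ℝ] ℝ) (ℓ : E →ₗ[ℝ] ℝ) :
    Continuous (quadEnergy B ℓ) :=
  (B.continuous_apply_self.div_const 2).sub ℓ.continuous_of_finiteDimensional

theorem existsUnique_isVarIneqSol (hB : ∀ x w, B x w = B w x)
    (hpos : ∀ x, x ≠ 0 → 0 < B x x) (hC : IsClosed C) (hCconv : Convex ℝ C)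
    (hCne : C.Nonempty) : ∃! x, IsVarIneqSol B ℓ C x := by
  obtain ⟨x₀, hx₀⟩ := hCne
  obtain ⟨x, hx, hmin⟩ := (continuous_quadEnergy B ℓ).continuousOn.exists_isMinOn' hC hx₀
    (((tendsto_quadEnergy_cocompact hpos).eventually
      (eventually_ge_atTop _)).filter_mono inf_le_left)
  exact ⟨x, hmin.isVarIneqSol hB hCconv hx, fun x' hx' =>
    hx'.unique hB hpos (hmin.isVarIneqSol hB hCconv hx)⟩

end FiniteDimensional

lemma inner_mul_inner_div_le {F : Type*} [NormedAddCommGroup F] [InnerProductSpace ℝ F]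
    (a p : F) : ⟪a, p⟫ * ⟪a, p⟫ / ‖a‖ ^ 3 ≤ ⟪p, p⟫ / ‖a‖ := by
  rcases eq_or_ne a 0 with rfl | ha
  · simp
  have ha' : 0 < ‖a‖ := norm_pos_iff.2 ha
  rw [div_le_div_iff₀ (by positivity) ha']
  have := real_inner_mul_inner_self_le a p
  rw [real_inner_self_eq_norm_sq a] at this
  nlinarith [real_inner_self_nonneg (x := p)]

section DirectionalDerivative

variable (K : Euc n →ₗ[ℝ] Rows m d) (y : Euc n)

lemma continuous_row (j : Fin m) : Continuous fun v : Euc n => K v j :=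
  ((PiLp.projₗ 2 (fun _ => Euc d) j).comp K).continuous_of_finiteDimensional

lemma secondForm_eq (x w : Euc n) :
    secondForm K y x w = ∑ j, if K y j ≠ 0 then
      ⟪K x j, K w j⟫ / ‖K y j‖ - ⟪K y j, K x j⟫ * ⟪K y j, K w j⟫ / ‖K y j‖ ^ 3 else 0 := by
  refine Finset.sum_congr rfl fun j _ => ?_
  split_ifs
  · rw [inner_sub_left, real_inner_smul_left, real_inner_smul_left]
    ring
  · rfl

lemma secondForm_comm (x w : Euc n) : secondForm K y x w = secondForm K y w x := by
  simp only [secondForm_eq]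
  refine Finset.sum_congr rfl fun j _ => ?_
  split_ifs
  · rw [real_inner_comm (K x j) (K w j)]
    ring
  · rfl

lemma secondForm_self_nonneg (x : Euc n) : 0 ≤ secondForm K y x x := by
  rw [secondForm_eq]
  refine Finset.sum_nonneg fun j _ => ?_
  split_ifs
  · exact sub_nonneg.2 (inner_mul_inner_div_le _ _)
  · exact le_rfl

lemma secondForm_add_right (x w₁ w₂ : Euc n) :
    secondForm K y x (w₁ + w₂) = secondForm K y x w₁ + secondForm K y x w₂ := by
  simp only [secondForm, ← Finset.sum_add_distrib]
  refine Finset.sum_congr rfl fun j _ => ?_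
  split_ifs
  · simp [inner_add_right]
  · simp

lemma secondForm_smul_right (c : ℝ) (x w : Euc n) :
    secondForm K y x (c • w) = c * secondForm K y x w := by
  simp only [secondForm, Finset.mul_sum]
  refine Finset.sum_congr rfl fun j _ => ?_
  split_ifs
  · simp [real_inner_smul_right]
  · simp

def secondBilin : Euc n →ₗ[ℝ] Euc n →ₗ[ℝ] ℝ :=
  LinearMap.mk₂ ℝ (secondForm K y)
    (fun x₁ x₂ w => by simp only [secondForm_comm K y _ w, secondForm_add_right])
    (fun c x w => by simp only [secondForm_comm K y _ w, secondForm_smul_right, smul_eq_mul])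
    (secondForm_add_right K y) (secondForm_smul_right K y)

lemma continuous_dirRHS : Continuous (dirRHS K y) :=
  continuous_finsetSum _ fun j _ => by
    split_ifs
    · exact continuous_const.inner (continuous_row K j)
    · exact (continuous_row K j).norm

lemma dirRHS_smul_add_smul_le {a b : ℝ} (ha : 0 ≤ a) (hb : 0 ≤ b) (v w : Euc n) :
    dirRHS K y (a • v + b • w) ≤ a * dirRHS K y v + b * dirRHS K y w := by
  simp only [dirRHS, Finset.mul_sum, ← Finset.sum_add_distrib]
  refine Finset.sum_le_sum fun j _ => ?_
  split_ifs
  · simp [inner_add_right, real_inner_smul_right]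
  · simpa [norm_smul, abs_of_nonneg ha, abs_of_nonneg hb] using
      norm_add_le (a • K v j) (b • K w j)

variable (A : Euc n →ₗ[ℝ] Euc n) (u : Euc n)

lemma zero_mem_Kcone : (0 : Euc n) ∈ Kcone A K u y := by
  simp [Kcone, dirRHS]

lemma isClosed_Kcone : IsClosed (Kcone A K u y) :=
  isClosed_le (continuous_dirRHS K y) (continuous_const.inner continuous_id)

lemma convex_Kcone : Convex ℝ (Kcone A K u y) := by
  intro v hv w hw a b ha hb _
  calc dirRHS K y (a • v + b • w) ≤ a * dirRHS K y v + b * dirRHS K y w :=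
        dirRHS_smul_add_smul_le K y ha hb v w
    _ ≤ a * ⟪u - A y, v⟫ + b * ⟪u - A y, w⟫ := by gcongr <;> assumption
    _ = ⟪u - A y, a • v + b • w⟫ := by
        rw [inner_add_right, real_inner_smul_right, real_inner_smul_right]

def fyBilin : Euc n →ₗ[ℝ] Euc n →ₗ[ℝ] ℝ :=
  innerₗ (Euc n) ∘ₗ A + secondBilin K y

lemma fyBilin_apply (x w : Euc n) : fyBilin K y A x w = ⟪A x, w⟫ + secondForm K y x w :=
  rfl

lemma fyBilin_comm (hA : ∀ x z : Euc n, ⟪A x, z⟫ = ⟪x, A z⟫) (x w : Euc n) :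
    fyBilin K y A x w = fyBilin K y A w x := by
  rw [fyBilin_apply, fyBilin_apply, hA, real_inner_comm, secondForm_comm]

lemma fyBilin_self_pos (hA : ∀ x : Euc n, x ≠ 0 → 0 < ⟪x, A x⟫) (x : Euc n) (hx : x ≠ 0) :
    0 < fyBilin K y A x x := by
  rw [fyBilin_apply, real_inner_comm]
  exact add_pos_of_pos_of_nonneg (hA x hx) (secondForm_self_nonneg K y x)

lemma vi1Sol_iff (h η : Euc n) :
    VI1Sol A K u y h η ↔ IsVarIneqSol (fyBilin K y A) (innerₗ (Euc n) h) (Kcone A K u y) η :=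
  Iff.rfl

lemma fy_eq_quadEnergy (h η : Euc n) :
    fy A K y h η = quadEnergy (fyBilin K y A) (innerₗ (Euc n) h) η := by
  have hterm : ∀ j, (if K y j ≠ 0 then
      ‖K η j‖ ^ 2 / ‖K y j‖ - ⟪K y j, K η j⟫ ^ 2 / ‖K y j‖ ^ 3 else 0) =
      if K y j ≠ 0 then ⟪K η j, K η j⟫ / ‖K y j‖ -
        ⟪K y j, K η j⟫ * ⟪K y j, K η j⟫ / ‖K y j‖ ^ 3 else 0 := fun j => by
    simp only [real_inner_self_eq_norm_sq, sq]
  simp only [fy, quadEnergy, fyBilin_apply, secondForm_eq, innerₗ_apply_apply, hterm,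
    real_inner_comm η]
  ring

end DirectionalDerivative

theorem stmt10_general {n m d : ℕ} (A : Euc n →ₗ[ℝ] Euc n)
    (hAsymm : ∀ x z : Euc n, ⟪A x, z⟫ = ⟪x, A z⟫)
    (hApos : ∀ x : Euc n, x ≠ 0 → 0 < ⟪x, A x⟫)
    (K : Euc n →ₗ[ℝ] Rows m d)
    (u y : Euc n) (h : Euc n) :
    (∃! η : Euc n, VI1Sol A K u y h η) ∧
    ∀ η : Euc n, VI1Sol A K u y h η →
      η ∈ Kcone A K u y ∧ ∀ v ∈ Kcone A K u y, v ≠ η → fy A K y h η < fy A K y h v := by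
  have hB := fyBilin_comm K y A hAsymm
  have hpos := fyBilin_self_pos K y A hApos
  simp only [vi1Sol_iff, fy_eq_quadEnergy]
  refine ⟨existsUnique_isVarIneqSol hB hpos (isClosed_Kcone K y A u) (convex_Kcone K y A u)
    ⟨0, zero_mem_Kcone K y A u⟩, fun η hη => ⟨hη.1, fun v hv hne => ?_⟩⟩
  exact hη.quadEnergy_lt hB hpos hv hne

/-- the VI of the first kind has exactly one solution, the unique
minimizer of `f_y` over `𝒦(y)`. -/
theorem stmt10 {n m d : ℕ} (A : Euc n →ₗ[ℝ] Euc n)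
    (hAsymm : ∀ x z : Euc n, ⟪A x, z⟫ = ⟪x, A z⟫)
    (hApos : ∀ x : Euc n, x ≠ 0 → 0 < ⟪x, A x⟫)
    (K : Euc n →ₗ[ℝ] Rows m d) (hK : Function.Injective K)
    (u y : Euc n) (hy : IsVISol A K u y) (h : Euc n) :
    (∃! η : Euc n, VI1Sol A K u y h η) ∧
    ∀ η : Euc n, VI1Sol A K u y h η →
      η ∈ Kcone A K u y ∧ ∀ v ∈ Kcone A K u y, v ≠ η → fy A K y h η < fy A K y h v :=
  stmt10_general A hAsymm hApos K u y h
end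
end
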